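/- arXiv:1007.0687 — 3 statements merged into one kernel-verified Lean document; each statement's English description precedes it below -/
import Mathlib

section
/- Let $\rho$ be a measure on $(0,\infty)$ for which $\mathfrak{A}(\rho)$ is definable. Then for every $\alpha > -1$ and $b>0$, there is a constant $C_1$ (depending only on $\alpha, b$, not on $\rho$) such that $\int_{(b,\infty)} u^{\alpha}\,\mathfrak{A}(\rho)(du) \le C_1 \int_{(b,\infty)} s^{\alpha + 1/2}\,\rho(ds)$. -/
/-!
By Tonelli, the left side equals
`∫_{s>b} (∫_b^s u^α π^{-1/2} (s-u)^{-1/2} du) ρ(ds)`. Enlarging the inner range to `(0,s)` and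
substituting `u = s t` turns the inner integral into `π^{-1/2} s^{α+1/2} ∫_0^1 t^α (1-t)^{-1/2} dt`,
a Beta integral that converges because `α > -1`. Tonelli needs `ρ` restricted to `(b,∞)` to be
σ-finite: this holds as soon as the right side is finite, since `s^{α+1/2} > 0` there, and
otherwise there is nothing to prove.
-/

open MeasureTheory Real Set ENNReal

/-- Density of the fractional integral transform `𝔄(ρ)` of order 1/2. -/
noncomputable def fracDensity (ρ : Measure ℝ) (u : ℝ) : ℝ≥0∞ :=
  ∫⁻ s in Set.Ioi u, ENNReal.ofReal (Real.pi ^ (-(1/2) : ℝ) * (s - u) ^ (-(1/2) : ℝ)) ∂ρ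

/-- `𝔄(ρ)` is definable, i.e. its density gives a locally finite measure on `(0,∞)`. -/
def fracDefinable (ρ : Measure ℝ) : Prop :=
  ∀ b c : ℝ, 0 < b → b < c → ∫⁻ u in Set.Ioo b c, fracDensity ρ u < ⊤

theorem integrableOn_rpow_mul_one_sub_rpow {α β : ℝ} (hα : -1 < α) (hβ : -1 < β) :
    IntegrableOn (fun t : ℝ => t ^ α * (1 - t) ^ β) (Ioo 0 1) := by
  have hbeta := (Complex.betaIntegral_convergent (u := α + 1) (v := β + 1)
    (by simp; linarith) (by simp; linarith)).norm
  rw [intervalIntegrable_iff_integrableOn_Ioo_of_le zero_le_one] at hbeta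
  refine hbeta.congr_fun (fun t ⟨ht0, ht1⟩ => ?_) measurableSet_Ioo
  have h1t : (1 : ℂ) - t = ((1 - t : ℝ) : ℂ) := by push_cast; ring
  simp only [add_sub_cancel_right, norm_mul, h1t, Complex.norm_cpow_eq_rpow_re_of_pos ht0,
    Complex.norm_cpow_eq_rpow_re_of_pos (sub_pos.2 ht1), Complex.ofReal_re]

theorem lintegral_rpow_mul_one_sub_rpow_pos (α β : ℝ) :
    0 < ∫⁻ t in Ioo 0 1, ENNReal.ofReal (t ^ α * (1 - t) ^ β) := by
  have hsupp :
      Function.support (fun t : ℝ => ENNReal.ofReal (t ^ α * (1 - t) ^ β)) ∩ Ioo 0 1 = Ioo 0 1 := by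
    refine inter_eq_right.2 fun t ⟨ht0, ht1⟩ => ?_
    have h1t : 0 < 1 - t := sub_pos.2 ht1
    exact (ofReal_pos.2 (by positivity)).ne'
  rw [setLIntegral_pos_iff (by fun_prop), hsupp, Real.volume_Ioo]
  norm_num

theorem lintegral_Ioo_rpow_mul_sub_rpow {α β s : ℝ} (hs : 0 < s) :
    ∫⁻ u in Ioo 0 s, ENNReal.ofReal (u ^ α * (s - u) ^ β) =
      ENNReal.ofReal (s ^ (α + β + 1)) *
        ∫⁻ t in Ioo 0 1, ENNReal.ofReal (t ^ α * (1 - t) ^ β) := by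
  have himage : (s * ·) '' Ioo 0 1 = Ioo 0 s := by
    rw [image_mul_left_Ioo hs, mul_zero, mul_one]
  rw [← himage, lintegral_image_eq_lintegral_abs_deriv_mul (f' := fun _ => s) measurableSet_Ioo
    (fun t _ => (hasDerivAt_const_mul s).hasDerivWithinAt)
    (mul_right_injective₀ hs.ne').injOn, ← lintegral_const_mul' _ _ ofReal_ne_top]
  refine setLIntegral_congr_fun measurableSet_Ioo fun t ⟨ht0, ht1⟩ => ?_
  rw [abs_of_pos hs, ← ofReal_mul hs.le, ← ofReal_mul (by positivity),
    show s - s * t = s * (1 - t) by ring, mul_rpow hs.le ht0.le,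
    mul_rpow hs.le (sub_pos.2 ht1).le, rpow_add hs, rpow_add hs, Real.rpow_one]
  ring_nf

/-- `μ` is the finite measure `μ.withDensity f` reweighted by the a.e. finite density `f⁻¹`. -/
theorem sigmaFinite_of_lintegral_ne_top {X : Type*} [MeasurableSpace X] {μ : Measure X}
    {f : X → ℝ≥0∞} (hf : AEMeasurable f μ) (hf_ne_zero : ∀ᵐ x ∂μ, f x ≠ 0)
    (hf_int : ∫⁻ x, f x ∂μ ≠ ∞) : SigmaFinite μ := by
  have : IsFiniteMeasure (μ.withDensity f) := isFiniteMeasure_withDensity hf_int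
  rw [← withDensity_inv_same₀ hf hf_ne_zero (ae_lt_top' hf hf_int |>.mono fun _ => ne_of_lt)]
  refine SigmaFinite.withDensity_of_ne_top ?_
  filter_upwards [withDensity_absolutelyContinuous μ f |>.ae_le hf_ne_zero] with x hx
  exact inv_ne_top.2 hx

noncomputable def fracKernel (x : ℝ) : ℝ≥0∞ :=
  ENNReal.ofReal (π ^ (-(1/2) : ℝ) * x ^ (-(1/2) : ℝ))

@[fun_prop]
theorem measurable_fracKernel : Measurable fracKernel := by
  unfold fracKernel; fun_prop

theorem fracDensity_eq (ρ : Measure ℝ) (u : ℝ) :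
    fracDensity ρ u = ∫⁻ s in Ioi u, fracKernel (s - u) ∂ρ := rfl

theorem lintegral_Ioi_mul_fracDensity (ρ : Measure ℝ) (b : ℝ) [SFinite (ρ.restrict (Ioi b))]
    {w : ℝ → ℝ≥0∞} (hw : Measurable w) :
    ∫⁻ u in Ioi b, w u * fracDensity ρ u =
      ∫⁻ s in Ioi b, (∫⁻ u in Ioo b s, w u * fracKernel (s - u)) ∂ρ := by
  set F : ℝ → ℝ → ℝ≥0∞ := fun u s => if u < s then w u * fracKernel (s - u) else 0
  have hF : Measurable (Function.uncurry F) :=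
    Measurable.ite (measurableSet_lt measurable_fst measurable_snd) (by fun_prop) measurable_const
  have h_inner (u : ℝ) (hu : u ∈ Ioi b) :
      w u * fracDensity ρ u = ∫⁻ s in Ioi b, F u s ∂ρ := by
    have hres : (ρ.restrict (Ioi b)).restrict (Ioi u) = ρ.restrict (Ioi u) := by
      rw [Measure.restrict_restrict measurableSet_Ioi,
        inter_eq_left.2 (Ioi_subset_Ioi hu.le)]
    rw [fracDensity_eq, ← lintegral_const_mul _ (by fun_prop), ← hres,
      ← lintegral_indicator measurableSet_Ioi]
    exact lintegral_congr fun s => by simp [F, indicator_apply]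
  have h_outer (s : ℝ) : ∫⁻ u in Ioi b, F u s = ∫⁻ u in Ioo b s, w u * fracKernel (s - u) := by
    rw [← Iio_inter_Ioi, ← Measure.restrict_restrict measurableSet_Iio,
      ← lintegral_indicator measurableSet_Iio]
    exact lintegral_congr fun u => by simp [F, indicator_apply]
  rw [setLIntegral_congr_fun measurableSet_Ioi h_inner,
    lintegral_lintegral_swap hF.aemeasurable]
  exact lintegral_congr h_outer

theorem lintegral_Ioo_zero_rpow_mul_fracKernel (α : ℝ) {s : ℝ} (hs : 0 < s) :
    ∫⁻ u in Ioo 0 s, ENNReal.ofReal (u ^ α) * fracKernel (s - u) =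
      ENNReal.ofReal (π ^ (-(1/2) : ℝ)) *
        (∫⁻ t in Ioo 0 1, ENNReal.ofReal (t ^ α * (1 - t) ^ (-(1/2) : ℝ))) *
          ENNReal.ofReal (s ^ (α + 1/2)) := by
  have hkernel : ∀ u ∈ Ioo 0 s, ENNReal.ofReal (u ^ α) * fracKernel (s - u) =
      ENNReal.ofReal (π ^ (-(1/2) : ℝ)) * ENNReal.ofReal (u ^ α * (s - u) ^ (-(1/2) : ℝ)) :=
    fun u ⟨hu, _⟩ => by
      rw [fracKernel, ← ofReal_mul (by positivity), ← ofReal_mul (by positivity)]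
      ring_nf
  rw [setLIntegral_congr_fun measurableSet_Ioo hkernel, lintegral_const_mul _ (by fun_prop),
    lintegral_Ioo_rpow_mul_sub_rpow hs]
  ring_nf

theorem fracIntegral_tail_bound (α b : ℝ) (hα : -1 < α) (hb : 0 < b) :
    ∃ C₁ : ℝ≥0∞, C₁ < ⊤ ∧ ∀ ρ : Measure ℝ, fracDefinable ρ →
      ∫⁻ u in Set.Ioi b, ENNReal.ofReal (u ^ α) * fracDensity ρ u ≤
        C₁ * ∫⁻ s in Set.Ioi b, ENNReal.ofReal (s ^ (α + 1/2)) ∂ρ := by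
  set C := ENNReal.ofReal (π ^ (-(1/2) : ℝ)) *
    ∫⁻ t in Ioo 0 1, ENNReal.ofReal (t ^ α * (1 - t) ^ (-(1/2) : ℝ))
  have hC_lt_top : C < ⊤ := mul_lt_top ofReal_lt_top
    (integrableOn_rpow_mul_one_sub_rpow hα (by norm_num)).lintegral_lt_top
  have hC_ne_zero : C ≠ 0 :=
    mul_ne_zero (ofReal_pos.2 (by positivity)).ne' (lintegral_rpow_mul_one_sub_rpow_pos _ _).ne'
  refine ⟨C, hC_lt_top, fun ρ _ => ?_⟩
  set R := ∫⁻ s in Ioi b, ENNReal.ofReal (s ^ (α + 1/2)) ∂ρ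
  rcases eq_or_ne R ⊤ with hR | hR
  · rw [hR, mul_top hC_ne_zero]
    exact le_top
  have hpos : ∀ᵐ s ∂ρ.restrict (Ioi b), ENNReal.ofReal (s ^ (α + 1/2)) ≠ 0 :=
    (ae_restrict_iff' measurableSet_Ioi).2 <| .of_forall fun s hs =>
      (ofReal_pos.2 (rpow_pos_of_pos (hb.trans hs) _)).ne'
  have : SigmaFinite (ρ.restrict (Ioi b)) := sigmaFinite_of_lintegral_ne_top (by fun_prop) hpos hR
  calc _ = ∫⁻ s in Ioi b, (∫⁻ u in Ioo b s, ENNReal.ofReal (u ^ α) * fracKernel (s - u)) ∂ρ :=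
        lintegral_Ioi_mul_fracDensity ρ b (by fun_prop)
    _ ≤ ∫⁻ s in Ioi b, C * ENNReal.ofReal (s ^ (α + 1/2)) ∂ρ :=
        setLIntegral_mono' measurableSet_Ioi fun s hs =>
          (lintegral_mono_set (Ioo_subset_Ioo_left hb.le)).trans_eq
            (lintegral_Ioo_zero_rpow_mul_fracKernel α (hb.trans hs))
    _ = C * R := lintegral_const_mul _ (by fun_prop)
end

section
/- Let $\rho$ be a measure on $(0,\infty)$ for which $\mathfrak{A}(\rho)$ is definable. Then for every $\alpha > -1$ and $b>0$, there is a constant $C_2$ (independent of $\rho$) such that $\int_{(0,b]} u^{\alpha}\,\mathfrak{A}(\rho)(du) \le C_2\big(\int_{(0,b]} s^{\alpha+1/2}\rho(ds) + \int_{(b,\infty)} s^{-1/2}\rho(ds)\big)$. -/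
/-!
By Tonelli the left-hand side equals
`π^(-1/2) ∫ (∫_{(0, b] ∩ (0, s)} u^α (s - u)^(-1/2) du) dρ(s)`, so it suffices to bound the inner
integral by a multiple of `s^(α+1/2)` for `s ≤ b` and of `s^(-1/2)` for `s > b`. Substituting
`u = s t` turns the integral over `(0, s)` into `s^(α+1/2) B(α+1, 1/2)`, which settles `s ≤ 2b`
(for `b < s ≤ 2b` use `s^(α+1) ≤ (2b)^(α+1)`); for `s > 2b` one has `s - u ≥ s/2` on `(0, b]`.
Tonelli needs s-finiteness, which `ρ` restricted to `(0, ∞)` has as soon as the right-hand side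
is finite, the weight being positive there.
-/

open MeasureTheory Real Set ENNReal

noncomputable def betaLIntegral (α β : ℝ) : ℝ≥0∞ :=
  ∫⁻ t in Ioo 0 1, ENNReal.ofReal (t ^ α) * ENNReal.ofReal ((1 - t) ^ β)

lemma betaLIntegral_lt_top {α β : ℝ} (hα : -1 < α) (hβ : -1 < β) :
    betaLIntegral α β < ∞ := by
  have hconv := Complex.betaIntegral_convergent (u := (α + 1 : ℝ)) (v := (β + 1 : ℝ))
    (by rw [Complex.ofReal_re]; linarith) (by rw [Complex.ofReal_re]; linarith)
  refine lt_of_le_of_lt ?_ hconv.1.hasFiniteIntegral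
  refine le_trans (le_of_eq (setLIntegral_congr_fun measurableSet_Ioo fun t ht => ?_))
    (lintegral_mono_set Ioo_subset_Ioc_self)
  have h1t : (1 - (t : ℂ)) = ((1 - t : ℝ) : ℂ) := by push_cast; ring
  rw [← ofReal_norm, norm_mul, h1t, Complex.norm_cpow_eq_rpow_re_of_pos ht.1,
    Complex.norm_cpow_eq_rpow_re_of_pos (sub_pos.2 ht.2),
    ENNReal.ofReal_mul (rpow_nonneg ht.1.le _)]
  simp

lemma setLIntegral_Ioo_rpow_mul_sub_rpow {s : ℝ} (hs : 0 < s) (α β : ℝ) :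
    ∫⁻ u in Ioo 0 s, ENNReal.ofReal (u ^ α) * ENNReal.ofReal ((s - u) ^ β) =
      ENNReal.ofReal (s ^ (α + β + 1)) * betaLIntegral α β := by
  have himage : (s * ·) '' Ioo (0 : ℝ) 1 = Ioo 0 s := by
    rw [image_mul_left_Ioo hs, mul_zero, mul_one]
  rw [← himage, lintegral_image_eq_lintegral_abs_deriv_mul measurableSet_Ioo
    (fun t _ => (hasDerivAt_const_mul s).hasDerivWithinAt) (mul_right_injective₀ hs.ne').injOn,
    betaLIntegral, ← lintegral_const_mul' _ _ ofReal_ne_top]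
  refine setLIntegral_congr_fun measurableSet_Ioo fun t ht => ?_
  have ht1 : 0 ≤ 1 - t := by linarith [ht.2]
  rw [abs_of_pos hs, ← mul_one_sub, mul_rpow hs.le ht.1.le, mul_rpow hs.le ht1,
    ← ENNReal.ofReal_mul (mul_nonneg (rpow_nonneg hs.le _) (rpow_nonneg ht.1.le _)),
    ← ENNReal.ofReal_mul hs.le, ← ENNReal.ofReal_mul (rpow_nonneg ht.1.le _),
    ← ENNReal.ofReal_mul (rpow_nonneg hs.le _)]
  congr 1
  rw [rpow_add hs, rpow_add hs, Real.rpow_one]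
  ring

lemma sFinite_of_lintegral_ne_top {X : Type*} [MeasurableSpace X] {μ : Measure X}
    {f : X → ℝ≥0∞} (hf : AEMeasurable f μ) (hf0 : ∀ᵐ x ∂μ, f x ≠ 0)
    (hfi : ∫⁻ x, f x ∂μ ≠ ∞) : SFinite μ :=
  have : IsFiniteMeasure (μ.withDensity f) := isFiniteMeasure_withDensity hfi
  sFinite_of_absolutelyContinuous (withDensity_absolutelyContinuous' hf hf0)

lemma fracDensity_restrict_Ioi {ρ : Measure ℝ} {a u : ℝ} (hu : a ≤ u) :
    fracDensity (ρ.restrict (Ioi a)) u = fracDensity ρ u := by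
  rw [fracDensity, Measure.restrict_restrict measurableSet_Ioi,
    inter_eq_left.2 (Ioi_subset_Ioi hu), fracDensity]

lemma lintegral_mul_fracDensity (μ ν : Measure ℝ) [SFinite μ] [SFinite ν] {g : ℝ → ℝ≥0∞}
    (hg : Measurable g) :
    ∫⁻ u, g u * fracDensity ν u ∂μ = ENNReal.ofReal (π ^ (-(1/2) : ℝ)) *
      ∫⁻ s, ∫⁻ u in Iio s, g u * ENNReal.ofReal ((s - u) ^ (-(1/2) : ℝ)) ∂μ ∂ν := by
  set k : ℝ → ℝ → ℝ≥0∞ := fun u s => g u * ENNReal.ofReal ((s - u) ^ (-(1/2) : ℝ))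
  have hk : Measurable fun p : ℝ × ℝ => {q : ℝ × ℝ | q.1 < q.2}.indicator
      (fun q => k q.1 q.2) p :=
    (by fun_prop : Measurable fun q : ℝ × ℝ => k q.1 q.2).indicator
      (measurableSet_lt measurable_fst measurable_snd)
  have hπ : (0 : ℝ) ≤ π ^ (-(1/2) : ℝ) := rpow_nonneg pi_pos.le _
  calc ∫⁻ u, g u * fracDensity ν u ∂μ
      = ENNReal.ofReal (π ^ (-(1/2) : ℝ)) * ∫⁻ u, ∫⁻ s, (Ioi u).indicator (k u) s ∂ν ∂μ := by
        rw [← lintegral_const_mul' _ _ ofReal_ne_top]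
        refine lintegral_congr fun u => ?_
        rw [fracDensity, lintegral_indicator measurableSet_Ioi,
          ← lintegral_const_mul _ (by fun_prop), ← lintegral_const_mul _ (by fun_prop)]
        refine lintegral_congr fun s => ?_
        rw [ENNReal.ofReal_mul hπ]
        ring
    _ = ENNReal.ofReal (π ^ (-(1/2) : ℝ)) * ∫⁻ s, ∫⁻ u, (Iio s).indicator (k · s) u ∂μ ∂ν := by
        rw [lintegral_lintegral_swap hk.aemeasurable]
        rfl
    _ = _ := by simp only [lintegral_indicator measurableSet_Iio, k]

lemma lintegral_Ioc_rpow {γ r : ℝ} (hγ : -1 < γ) (hr : 0 ≤ r) :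
    ∫⁻ u in Ioc 0 r, ENNReal.ofReal (u ^ γ) = ENNReal.ofReal (r ^ (γ + 1) / (γ + 1)) := by
  rw [← ofReal_integral_eq_lintegral_ofReal, ← intervalIntegral.integral_of_le hr,
    integral_rpow (Or.inl hγ), zero_rpow (by linarith), sub_zero]
  · exact (intervalIntegrable_iff_integrableOn_Ioc_of_le hr).1
      (intervalIntegral.intervalIntegrable_rpow' hγ)
  · exact (ae_restrict_iff' measurableSet_Ioc).2 (.of_forall fun u hu => rpow_nonneg hu.1.le γ)

lemma setLIntegral_Ioc_rpow_mul_sub_rpow_le {α β r s : ℝ} (hα : -1 < α) (hβ : β ≤ 0)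
    (hr : 0 ≤ r) (hrs : r < s) :
    ∫⁻ u in Ioc 0 r, ENNReal.ofReal (u ^ α) * ENNReal.ofReal ((s - u) ^ β) ≤
      ENNReal.ofReal (r ^ (α + 1) / (α + 1)) * ENNReal.ofReal ((s - r) ^ β) := by
  calc ∫⁻ u in Ioc 0 r, ENNReal.ofReal (u ^ α) * ENNReal.ofReal ((s - u) ^ β)
      ≤ ∫⁻ u in Ioc 0 r, ENNReal.ofReal (u ^ α) * ENNReal.ofReal ((s - r) ^ β) :=
        setLIntegral_mono' measurableSet_Ioc fun u hu => mul_le_mul_right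
          (ENNReal.ofReal_le_ofReal
            (rpow_le_rpow_of_nonpos (by linarith) (by linarith [hu.2]) hβ)) _
    _ = _ := by rw [lintegral_mul_const' _ _ ofReal_ne_top, lintegral_Ioc_rpow hα hr]

lemma setLIntegral_rpow_mul_sub_rpow_le_of_subset_Ioo {A : Set ℝ} {s : ℝ} (hs : 0 < s)
    (hA : A ⊆ Ioo 0 s) (α β : ℝ) :
    ∫⁻ u in A, ENNReal.ofReal (u ^ α) * ENNReal.ofReal ((s - u) ^ β) ≤
      ENNReal.ofReal (s ^ (α + β + 1)) * betaLIntegral α β :=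
  (lintegral_mono_set hA).trans_eq (setLIntegral_Ioo_rpow_mul_sub_rpow hs α β)

noncomputable def nearZeroWeight (α b s : ℝ) : ℝ≥0∞ :=
  (Ioc 0 b).indicator (fun s => ENNReal.ofReal (s ^ (α + 1/2))) s +
    (Ioi b).indicator (fun s => ENNReal.ofReal (s ^ (-(1/2) : ℝ))) s

noncomputable def farConst (α b : ℝ) : ℝ≥0∞ :=
  betaLIntegral α (-(1/2)) * ENNReal.ofReal ((2 * b) ^ (α + 1)) +
    ENNReal.ofReal (2 ^ (1/2 : ℝ) * (b ^ (α + 1) / (α + 1)))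

noncomputable def nearZeroConst (α b : ℝ) : ℝ≥0∞ :=
  betaLIntegral α (-(1/2)) + farConst α b

lemma setLIntegral_Ioc_rpow_mul_sub_rpow_le_farConst {α b s : ℝ} (hα : -1 < α) (hb : 0 < b)
    (hbs : b < s) :
    ∫⁻ u in Ioc 0 b, ENNReal.ofReal (u ^ α) * ENNReal.ofReal ((s - u) ^ (-(1/2) : ℝ)) ≤
      farConst α b * ENNReal.ofReal (s ^ (-(1/2) : ℝ)) := by
  have hs : 0 < s := hb.trans hbs
  rcases le_or_gt s (2 * b) with hs2b | hs2b
  · have hsplit : s ^ (α + -(1/2) + 1) = s ^ (α + 1) * s ^ (-(1/2) : ℝ) := by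
      rw [← rpow_add hs]; ring_nf
    calc _ ≤ ENNReal.ofReal (s ^ (α + -(1/2) + 1)) * betaLIntegral α (-(1/2)) :=
          setLIntegral_rpow_mul_sub_rpow_le_of_subset_Ioo hs
            (fun u hu => ⟨hu.1, hu.2.trans_lt hbs⟩) _ _
      _ ≤ betaLIntegral α (-(1/2)) * ENNReal.ofReal ((2 * b) ^ (α + 1)) *
            ENNReal.ofReal (s ^ (-(1/2) : ℝ)) := by
        rw [hsplit, ENNReal.ofReal_mul (rpow_nonneg hs.le _), mul_comm, ← mul_assoc]
        gcongr
        linarith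
      _ ≤ _ := by gcongr; exact le_self_add
  · have hhalf : (s - b) ^ (-(1/2) : ℝ) ≤ 2 ^ (1/2 : ℝ) * s ^ (-(1/2) : ℝ) := by
      calc (s - b) ^ (-(1/2) : ℝ) ≤ (s / 2) ^ (-(1/2) : ℝ) :=
            rpow_le_rpow_of_nonpos (by positivity) (by linarith) (by norm_num)
        _ = 2 ^ (1/2 : ℝ) * s ^ (-(1/2) : ℝ) := by
          rw [div_rpow hs.le zero_le_two, rpow_neg zero_le_two, div_inv_eq_mul, mul_comm]
    have hI : 0 ≤ b ^ (α + 1) / (α + 1) := div_nonneg (rpow_nonneg hb.le _) (by linarith)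
    calc _ ≤ ENNReal.ofReal (b ^ (α + 1) / (α + 1)) * ENNReal.ofReal ((s - b) ^ (-(1/2) : ℝ)) :=
          setLIntegral_Ioc_rpow_mul_sub_rpow_le hα (by norm_num) hb.le hbs
      _ ≤ ENNReal.ofReal (2 ^ (1/2 : ℝ) * (b ^ (α + 1) / (α + 1))) *
            ENNReal.ofReal (s ^ (-(1/2) : ℝ)) := by
        rw [← ENNReal.ofReal_mul hI, ← ENNReal.ofReal_mul (by positivity)]
        refine ENNReal.ofReal_le_ofReal ?_
        rw [mul_comm (2 ^ _), mul_assoc]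
        gcongr
      _ ≤ _ := by gcongr; exact le_add_self

lemma setLIntegral_rpow_mul_sub_rpow_le_nearZeroWeight {α b : ℝ} (hα : -1 < α) (hb : 0 < b)
    (s : ℝ) :
    ∫⁻ u in Iio s ∩ Ioc 0 b, ENNReal.ofReal (u ^ α) * ENNReal.ofReal ((s - u) ^ (-(1/2) : ℝ)) ≤
      nearZeroConst α b * nearZeroWeight α b s := by
  rcases le_or_gt s 0 with hs | hs
  · have hempty : Iio s ∩ Ioc 0 b = ∅ :=
      eq_empty_of_forall_notMem fun u hu => by linarith [mem_Iio.1 hu.1, hu.2.1]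
    rw [hempty, Measure.restrict_empty, lintegral_zero_measure]
    exact zero_le
  rcases le_or_gt s b with hsb | hsb
  · rw [nearZeroWeight, indicator_of_mem (show s ∈ Ioc 0 b from ⟨hs, hsb⟩),
      indicator_of_notMem (show s ∉ Ioi b from hsb.not_gt), add_zero]
    calc _ ≤ ENNReal.ofReal (s ^ (α + -(1/2) + 1)) * betaLIntegral α (-(1/2)) :=
          setLIntegral_rpow_mul_sub_rpow_le_of_subset_Ioo hs (fun u hu => ⟨hu.2.1, hu.1⟩) _ _
      _ ≤ _ := by
        rw [mul_comm, show α + -(1/2 : ℝ) + 1 = α + 1/2 by ring]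
        gcongr
        exact le_self_add
  · rw [nearZeroWeight, indicator_of_notMem (show s ∉ Ioc 0 b from fun h => hsb.not_ge h.2),
      indicator_of_mem (show s ∈ Ioi b from hsb), zero_add,
      inter_eq_right.2 fun u hu => hu.2.trans_lt hsb]
    calc _ ≤ farConst α b * ENNReal.ofReal (s ^ (-(1/2) : ℝ)) :=
          setLIntegral_Ioc_rpow_mul_sub_rpow_le_farConst hα hb hsb
      _ ≤ _ := by gcongr; exact le_add_self

lemma nearZeroConst_lt_top {α b : ℝ} (hα : -1 < α) : nearZeroConst α b < ∞ := by
  have hB := betaLIntegral_lt_top hα (show -1 < -(1/2 : ℝ) by norm_num)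
  exact add_lt_top.2 ⟨hB, add_lt_top.2 ⟨mul_lt_top hB ofReal_lt_top, ofReal_lt_top⟩⟩

lemma nearZeroConst_ne_zero {α b : ℝ} (hα : -1 < α) (hb : 0 < b) : nearZeroConst α b ≠ 0 := by
  have hpos : 0 < 2 ^ (1/2 : ℝ) * (b ^ (α + 1) / (α + 1)) :=
    mul_pos (rpow_pos_of_pos two_pos _) (div_pos (rpow_pos_of_pos hb _) (by linarith))
  exact fun h => (ofReal_pos.2 hpos).ne' (add_eq_zero.1 (add_eq_zero.1 h).2).2

lemma measurable_nearZeroWeight (α b : ℝ) : Measurable (nearZeroWeight α b) :=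
  ((by fun_prop : Measurable fun s : ℝ => ENNReal.ofReal (s ^ (α + 1/2))).indicator
    measurableSet_Ioc).add
    ((by fun_prop : Measurable fun s : ℝ => ENNReal.ofReal (s ^ (-(1/2) : ℝ))).indicator
      measurableSet_Ioi)

lemma nearZeroWeight_ne_zero {α b s : ℝ} (hs : 0 < s) : nearZeroWeight α b s ≠ 0 := by
  rcases le_or_gt s b with hsb | hsb <;>
    simp [nearZeroWeight, indicator, hs, hsb, rpow_pos_of_pos hs]

lemma support_nearZeroWeight_subset {α b : ℝ} (hb : 0 ≤ b) :
    Function.support (nearZeroWeight α b) ⊆ Ioi 0 := by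
  intro s hs
  by_contra h
  have hs0 : s ≤ 0 := not_lt.1 h
  simp [nearZeroWeight, indicator, hs0.not_gt, (hs0.trans hb).not_gt] at hs

lemma lintegral_nearZeroWeight (α b : ℝ) (ρ : Measure ℝ) :
    ∫⁻ s, nearZeroWeight α b s ∂ρ =
      ∫⁻ s in Ioc 0 b, ENNReal.ofReal (s ^ (α + 1/2)) ∂ρ +
        ∫⁻ s in Ioi b, ENNReal.ofReal (s ^ (-(1/2) : ℝ)) ∂ρ := by
  unfold nearZeroWeight
  rw [lintegral_add_left (Measurable.indicator (by fun_prop) measurableSet_Ioc),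
    lintegral_indicator measurableSet_Ioc, lintegral_indicator measurableSet_Ioi]

lemma setLIntegral_Ioc_rpow_mul_fracDensity_le {α b : ℝ} (hα : -1 < α) (hb : 0 < b)
    (ν : Measure ℝ) [SFinite ν] :
    ∫⁻ u in Ioc 0 b, ENNReal.ofReal (u ^ α) * fracDensity ν u ≤
      ENNReal.ofReal (π ^ (-(1/2) : ℝ)) * nearZeroConst α b * ∫⁻ s, nearZeroWeight α b s ∂ν := by
  rw [lintegral_mul_fracDensity _ _ (by fun_prop), mul_assoc,
    ← lintegral_const_mul _ (measurable_nearZeroWeight α b)]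
  gcongr with s
  rw [Measure.restrict_restrict measurableSet_Iio]
  exact setLIntegral_rpow_mul_sub_rpow_le_nearZeroWeight hα hb s

theorem fracIntegral_near_zero_bound (α b : ℝ) (hα : -1 < α) (hb : 0 < b) :
    ∃ C₂ : ℝ≥0∞, C₂ < ⊤ ∧ ∀ ρ : Measure ℝ, fracDefinable ρ →
      ∫⁻ u in Set.Ioc 0 b, ENNReal.ofReal (u ^ α) * fracDensity ρ u ≤
        C₂ * (∫⁻ s in Set.Ioc 0 b, ENNReal.ofReal (s ^ (α + 1/2)) ∂ρ +
          ∫⁻ s in Set.Ioi b, ENNReal.ofReal (s ^ (-(1/2) : ℝ)) ∂ρ) := by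
  refine ⟨ENNReal.ofReal (π ^ (-(1/2) : ℝ)) * nearZeroConst α b,
    mul_lt_top ofReal_lt_top (nearZeroConst_lt_top hα), fun ρ _ => ?_⟩
  rw [← lintegral_nearZeroWeight]
  by_cases hfin : ∫⁻ s, nearZeroWeight α b s ∂ρ = ∞
  · rw [hfin, mul_top (mul_ne_zero (ofReal_pos.2 (rpow_pos_of_pos pi_pos _)).ne'
      (nearZeroConst_ne_zero hα hb))]
    exact le_top
  have hsupp : ∫⁻ s in Ioi 0, nearZeroWeight α b s ∂ρ = ∫⁻ s, nearZeroWeight α b s ∂ρ :=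
    setLIntegral_eq_of_support_subset (support_nearZeroWeight_subset hb.le)
  have : SFinite (ρ.restrict (Ioi 0)) :=
    sFinite_of_lintegral_ne_top (measurable_nearZeroWeight α b).aemeasurable
      ((ae_restrict_iff' measurableSet_Ioi).2 (.of_forall fun s hs => nearZeroWeight_ne_zero hs))
      (hsupp ▸ hfin)
  calc ∫⁻ u in Ioc 0 b, ENNReal.ofReal (u ^ α) * fracDensity ρ u
      = ∫⁻ u in Ioc 0 b, ENNReal.ofReal (u ^ α) * fracDensity (ρ.restrict (Ioi 0)) u :=
        setLIntegral_congr_fun measurableSet_Ioc fun u hu => by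
          rw [fracDensity_restrict_Ioi hu.1.le]
    _ ≤ _ := setLIntegral_Ioc_rpow_mul_fracDensity_le hα hb _
    _ = _ := by rw [hsupp]
end

section
/- Let $\nu$ be a L\'evy measure on $\mathbb{R}^d$ and define $\Upsilon^0(\nu)(B) = \int_0^{\infty}\nu(u^{-1}B)e^{-u}du$. Then $\int_{\mathbb{R}^d}(1\wedge|x|)\,\Upsilon^0(\nu)(dx) < \infty$ if and only if $\int_{\mathbb{R}^d}(1\wedge|x|)\,\nu(dx) < \infty$. -/
/-! `Υ⁰(ν)` is a mixture of the dilations of `ν`, so for `f = 1 ∧ |x|` one has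
`∫ f dΥ⁰(ν) = ∫₀^∞ e^{-u} ∫ f(u x) ν(dx) du`. As `1 ∧ r ≤ 1 ∧ u r` for `u ≥ 1` and
`1 ∧ u r ≤ (1 + u) (1 ∧ r)` for `u ≥ 0`, the inner integral lies between `∫ f dν` (for `u ≥ 1`)
and `(1 + u) ∫ f dν`, and `e^{-u} (1 + u)` is integrable. The mixture formula needs `u ↦ ν(u⁻¹ B)`
to be measurable, which holds because the Lévy condition makes `ν` s-finite: σ-finite away from
`0`, and a multiple of a Dirac mass on `{0}`. -/

open MeasureTheory Real Set ENNReal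

variable {d : ℕ}

/-- The Upsilon transformation `Υ⁰` with dilation measure `e^{-u} du`:
`Υ⁰(ν)(B) = ∫₀^∞ ν(u⁻¹B) e^{-u} du`. -/
noncomputable def Upsilon0 (ν : Measure (EuclideanSpace ℝ (Fin d))) :
    Measure (EuclideanSpace ℝ (Fin d)) :=
  ((volume.restrict (Set.Ioi (0 : ℝ))).withDensity
      (fun u => ENNReal.ofReal (Real.exp (-u)))).bind
    fun u => Measure.map (fun x : EuclideanSpace ℝ (Fin d) => u • x) ν

lemma min_one_mul_le_one_add_mul_min_one {u r : ℝ} (hu : 0 ≤ u) (hr : 0 ≤ r) :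
    min 1 (u * r) ≤ (1 + u) * min 1 r := by
  rcases le_total r 1 with h | h
  · rw [min_eq_right h]
    nlinarith [min_le_right 1 (u * r)]
  · rw [min_eq_left h]
    linarith [min_le_left 1 (u * r)]

section Dilation

variable {E : Type*} [SeminormedAddCommGroup E] [NormedSpace ℝ E] [MeasurableSpace E]

lemma lintegral_ofReal_min_one_norm_smul_le (ν : Measure E) {u : ℝ} (hu : 0 ≤ u) :
    ∫⁻ x, ENNReal.ofReal (min 1 ‖u • x‖) ∂ν ≤
      ENNReal.ofReal (1 + u) * ∫⁻ x, ENNReal.ofReal (min 1 ‖x‖) ∂ν := by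
  rw [← lintegral_const_mul' _ _ ofReal_ne_top]
  refine lintegral_mono fun x => ?_
  rw [← ENNReal.ofReal_mul (by linarith), norm_smul, norm_of_nonneg hu]
  exact ENNReal.ofReal_le_ofReal (min_one_mul_le_one_add_mul_min_one hu (norm_nonneg x))

lemma lintegral_ofReal_min_one_norm_le_smul (ν : Measure E) {u : ℝ} (hu : 1 ≤ u) :
    ∫⁻ x, ENNReal.ofReal (min 1 ‖x‖) ∂ν ≤ ∫⁻ x, ENNReal.ofReal (min 1 ‖u • x‖) ∂ν := by
  refine lintegral_mono fun x => ENNReal.ofReal_le_ofReal (min_le_min_left 1 ?_)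
  rw [norm_smul, norm_of_nonneg (zero_le_one.trans hu)]
  exact le_mul_of_one_le_left (norm_nonneg x) hu

end Dilation

lemma sFinite_of_lintegral_min_one_norm_sq_lt_top {E : Type*} [NormedAddCommGroup E]
    [MeasurableSpace E] [OpensMeasurableSpace E] (ν : Measure E)
    (hν : ∫⁻ x, ENNReal.ofReal (min 1 (‖x‖ ^ 2)) ∂ν < ⊤) : SFinite ν := by
  set g : E → ℝ≥0∞ := fun x => ENNReal.ofReal (min 1 (‖x‖ ^ 2))
  have hg : Measurable g := (measurable_const.min (measurable_norm.pow_const 2)).ennreal_ofReal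
  have hg_ne_zero : ∀ᵐ x ∂ν.restrict {0}ᶜ, g x ≠ 0 := by
    filter_upwards [ae_restrict_mem (measurableSet_singleton 0).compl] with x hx
    have : 0 < ‖x‖ := norm_pos_iff.2 hx
    exact (ENNReal.ofReal_pos.2 (lt_min one_pos (by positivity))).ne'
  have : IsFiniteMeasure ((ν.restrict {0}ᶜ).withDensity g) :=
    isFiniteMeasure_withDensity ((setLIntegral_le_lintegral _ _).trans_lt hν).ne
  have : SFinite (ν.restrict {0}ᶜ) := by
    rw [← withDensity_inv_same hg hg_ne_zero (ae_of_all _ fun _ => ofReal_ne_top)]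
    infer_instance
  rw [← ν.restrict_add_restrict_compl (measurableSet_singleton 0), ν.restrict_singleton]
  infer_instance

lemma measurable_map_smul {M E : Type*} [MeasurableSpace M] [MeasurableSpace E] [SMul M E]
    [MeasurableSMul₂ M E] (ν : Measure E) [SFinite ν] :
    Measurable fun c : M => ν.map (c • ·) := by
  have hmap : ∀ c : M, ν.map (c • ·) = (ν.map (Prod.mk c)).map fun p : M × E => p.1 • p.2 :=
    fun c => (Measure.map_map measurable_smul measurable_prodMk_left).symm
  simp_rw [hmap]
  exact (Measure.measurable_map _ measurable_smul).comp Measurable.map_prodMk_left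

lemma lintegral_upsilon0 (ν : Measure (EuclideanSpace ℝ (Fin d))) [SFinite ν]
    {f : EuclideanSpace ℝ (Fin d) → ℝ≥0∞} (hf : Measurable f) :
    ∫⁻ x, f x ∂(Upsilon0 ν) =
      ∫⁻ u in Ioi 0, ENNReal.ofReal (Real.exp (-u)) * ∫⁻ x, f (u • x) ∂ν := by
  rw [Upsilon0, Measure.lintegral_bind (measurable_map_smul ν).aemeasurable hf.aemeasurable,
    lintegral_withDensity_eq_lintegral_mul_non_measurable _ (by fun_prop)
      (ae_of_all _ fun _ => ofReal_lt_top)]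
  refine lintegral_congr fun u => ?_
  rw [Pi.mul_apply, lintegral_map hf (measurable_const_smul u)]

lemma integrableOn_exp_neg_mul_one_add : IntegrableOn (fun u => exp (-u) * (1 + u)) (Ioi 0) := by
  refine ((integrableOn_exp_neg_Ioi 0).add (GammaIntegral_convergent two_pos)).congr_fun
    (fun u _ => ?_) measurableSet_Ioi
  norm_num
  ring

lemma lintegral_exp_neg_mul_lt_top_iff {J : ℝ → ℝ≥0∞} {I : ℝ≥0∞}
    (hle : ∀ u, 0 < u → J u ≤ ENNReal.ofReal (1 + u) * I) (hge : ∀ u, 1 < u → I ≤ J u) :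
    ∫⁻ u in Ioi 0, ENNReal.ofReal (exp (-u)) * J u < ⊤ ↔ I < ⊤ := by
  constructor
  · intro h
    have hpos : ∫⁻ u in Ioi 1, ENNReal.ofReal (exp (-u)) ≠ 0 := by
      rw [← ofReal_integral_eq_lintegral_ofReal (integrableOn_exp_neg_Ioi 1)
        (ae_of_all _ fun u => (exp_pos _).le), integral_exp_neg_Ioi]
      exact (ENNReal.ofReal_pos.2 (exp_pos _)).ne'
    refine ENNReal.lt_top_of_mul_ne_top_right ?_ hpos
    refine (lt_of_le_of_lt ?_ h).ne
    calc (∫⁻ u in Ioi 1, ENNReal.ofReal (exp (-u))) * I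
        = ∫⁻ u in Ioi 1, ENNReal.ofReal (exp (-u)) * I := (lintegral_mul_const _ (by fun_prop)).symm
      _ ≤ ∫⁻ u in Ioi 1, ENNReal.ofReal (exp (-u)) * J u :=
          setLIntegral_mono_ae' measurableSet_Ioi
            (ae_of_all _ fun u hu => mul_le_mul_right (hge u hu) _)
      _ ≤ ∫⁻ u in Ioi 0, ENNReal.ofReal (exp (-u)) * J u :=
          lintegral_mono_set (Ioi_subset_Ioi zero_le_one)
  · intro h
    calc ∫⁻ u in Ioi 0, ENNReal.ofReal (exp (-u)) * J u
        ≤ ∫⁻ u in Ioi 0, ENNReal.ofReal (exp (-u) * (1 + u)) * I := by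
          refine setLIntegral_mono_ae' measurableSet_Ioi (ae_of_all _ fun u hu => ?_)
          rw [ENNReal.ofReal_mul (exp_pos _).le, mul_assoc]
          exact mul_le_mul_right (hle u hu) _
      _ = (∫⁻ u in Ioi 0, ENNReal.ofReal (exp (-u) * (1 + u))) * I :=
          lintegral_mul_const' _ _ h.ne
      _ < ⊤ := ENNReal.mul_lt_top integrableOn_exp_neg_mul_one_add.setLIntegral_lt_top h

theorem upsilon0_first_moment_iff_general (ν : Measure (EuclideanSpace ℝ (Fin d)))
    (hν : ∫⁻ x, ENNReal.ofReal (min 1 (‖x‖ ^ 2)) ∂ν < ⊤) :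
    (∫⁻ x, ENNReal.ofReal (min 1 ‖x‖) ∂(Upsilon0 ν) < ⊤) ↔
      (∫⁻ x, ENNReal.ofReal (min 1 ‖x‖) ∂ν < ⊤) := by
  have := sFinite_of_lintegral_min_one_norm_sq_lt_top ν hν
  rw [lintegral_upsilon0 ν (measurable_const.min measurable_norm).ennreal_ofReal]
  exact lintegral_exp_neg_mul_lt_top_iff
    (fun u hu => lintegral_ofReal_min_one_norm_smul_le ν hu.le)
    (fun u hu => lintegral_ofReal_min_one_norm_le_smul ν hu.le)

theorem upsilon0_first_moment_iff (ν : Measure (EuclideanSpace ℝ (Fin d)))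
    (hν0 : ν {0} = 0) (hν : ∫⁻ x, ENNReal.ofReal (min 1 (‖x‖ ^ 2)) ∂ν < ⊤) :
    (∫⁻ x, ENNReal.ofReal (min 1 ‖x‖) ∂(Upsilon0 ν) < ⊤) ↔
      (∫⁻ x, ENNReal.ofReal (min 1 ‖x‖) ∂ν < ⊤) :=
  upsilon0_first_moment_iff_general ν hν
end
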